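/- Let V_η : ℝ⁴ → ℝ⁴ be the Wolbachia gonosomal operator. For η = 1/2, the set of non-zero fixed points of V_{1/2} is exactly { (4/3, 4/3, −4/3, 4) } ∪ { (ρ, 2−ρ, 0, 2) : ρ ∈ ℝ }. For η = 1, the set of non-zero fixed points of V_1 is exactly { (β, 2, −β, 2) : β ∈ ℝ }. -/
import Mathlib


/-- The Wolbachia gonosomal operator with parameter `η`. -/
noncomputable def wolbOp (η : ℝ) (p : ℝ × ℝ × ℝ × ℝ) : ℝ × ℝ × ℝ × ℝ :=
  (η * p.1 * p.2.2.2 + (η / 2) * p.2.2.1 * p.2.2.2,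
   (1 / 2) * p.2.1 * p.2.2.2 + ((1 - η) / 2) * p.2.2.1 * p.2.2.2,
   (η / 2) * p.2.2.1 * p.2.2.2,
   (1 - η) * p.1 * p.2.2.2 + (1 / 2) * p.2.1 * p.2.2.2 + ((1 - η) / 2) * p.2.2.1 * p.2.2.2)

set_option maxHeartbeats 2000000 in
theorem wolbOp_fixed_points_extreme :
    ({p : ℝ × ℝ × ℝ × ℝ | wolbOp (1 / 2) p = p ∧ p ≠ 0} =
      insert ((4 : ℝ) / 3, (4 : ℝ) / 3, -(4 : ℝ) / 3, (4 : ℝ))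
        {p : ℝ × ℝ × ℝ × ℝ | ∃ ρ : ℝ, p = (ρ, 2 - ρ, 0, 2)}) ∧
    ({p : ℝ × ℝ × ℝ × ℝ | wolbOp 1 p = p ∧ p ≠ 0} =
      {p : ℝ × ℝ × ℝ × ℝ | ∃ β : ℝ, p = (β, 2, -β, 2)}) := by
  constructor
  · ext ⟨x, y, z, u⟩
    simp only [Set.mem_setOf_eq, Set.mem_insert_iff, wolbOp, Prod.mk.injEq, ne_eq,
      Prod.mk_eq_zero, not_and]
    constructor
    · rintro ⟨⟨h1, h2, h3, h4⟩, hne⟩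
      have hz : z * (u - 4) = 0 := by linarith [h3]
      rcases mul_eq_zero.1 hz with hz0 | hu4
      · subst hz0
        have hx : x * (u - 2) = 0 := by nlinarith [h1]
        have hy : y * (u - 2) = 0 := by nlinarith [h2]
        by_cases hu : u = 2
        · subst hu
          right
          refine ⟨x, ?_⟩
          have hyx : y = 2 - x := by linarith
          rw [hyx]
          exact ⟨rfl, rfl, rfl, rfl⟩
        · have hx0 : x = 0 := by
            rcases mul_eq_zero.1 hx with h | h
            · exact h
            · exact absurd (by linarith : u = 2) hu
          have hy0 : y = 0 := by
            rcases mul_eq_zero.1 hy with h | h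
            · exact h
            · exact absurd (by linarith : u = 2) hu
          have hu0 : u = 0 := by nlinarith [h4]
          exact (hne hx0 hy0 rfl hu0).elim
      · have hu : u = 4 := by linarith
        subst hu
        have hzv : z = -(4 / 3) := by nlinarith [h1, h2, h4]
        have hxv : x = 4 / 3 := by nlinarith [h1]
        have hyv : y = 4 / 3 := by nlinarith [h2]
        left
        exact ⟨hxv, hyv, by rw [hzv]; ring, rfl⟩
    · rintro (⟨hx, hy, hz, hu⟩ | ⟨ρ, hx, hy, hz, hu⟩)
      · subst hx; subst hy; subst hz; subst hu
        refine ⟨⟨by norm_num, by norm_num, by norm_num, by norm_num⟩, ?_⟩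
        intro _ _ _ h; norm_num at h
      · subst hx; subst hy; subst hz; subst hu
        refine ⟨⟨by ring, by ring, by norm_num, by ring⟩, ?_⟩
        intro _ _ _ h; norm_num at h
  · ext ⟨x, y, z, u⟩
    simp only [Set.mem_setOf_eq, wolbOp, Prod.mk.injEq, ne_eq, Prod.mk_eq_zero, not_and]
    constructor
    · rintro ⟨⟨h1, h2, h3, h4⟩, hne⟩
      have hy : y * (u - 2) = 0 := by nlinarith [h2]
      have huy : u * (y - 2) = 0 := by nlinarith [h4]
      by_cases hu : u = 2
      · subst hu
        have hy2 : y = 2 := by nlinarith [huy]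
        have hxz : x = -z := by nlinarith [h1]
        exact ⟨x, rfl, hy2, by linarith, rfl⟩
      · have hy0 : y = 0 := by
          rcases mul_eq_zero.1 hy with h | h
          · exact h
          · exact absurd (by linarith : u = 2) hu
        have hu0 : u = 0 := by
          rcases mul_eq_zero.1 huy with h | h
          · exact h
          · exact absurd (by linarith : y = 2) (by simp [hy0])
        have hx0 : x = 0 := by rw [hu0] at h1; linarith
        have hz0 : z = 0 := by rw [hu0] at h3; linarith
        exact (hne hx0 hy0 hz0 hu0).elim
    · rintro ⟨β, hx, hy, hz, hu⟩
      subst hx; subst hy; subst hz; subst hu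
      refine ⟨⟨by ring, by ring, by ring, by ring⟩, ?_⟩
      intro _ h; norm_num at h
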